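/- Let p be a prime, s > 0 a real number, and (a_k)_{k ≥ 0} a sequence of real numbers with a_0 = 1, |a_k| ≤ k + 1 for all k ≥ 0, and a_{k+1} = a_1·a_k − a_{k−1} for all k ≥ 1. For each integer r ≥ 0 set R_r := Σ_{k ≥ 0} a_k · a_{k+r} · p^{−ks} (an absolutely convergent series). Then R_1 = (a_1/(1 + p^{−s}))·R_0, and R_r = a_1·R_{r−1} − R_{r−2} for every r ≥ 2. -/

import Mathlib

/-!
With `q = p^{-s} ∈ (0, 1)` the sums are `R_r = Σ_k a_k a_{k+r} q^k`, absolutely convergent because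
the Deligne bound makes the terms `O(k^2 q^k)`. Multiplying the Hecke recurrence at index `k + r - 1`
by `a_k q^k` and summing gives `R_r = a_1 R_{r-1} - R_{r-2}` for `r ≥ 2`. For `r = 1` the recurrence
at index `k` turns `a_1 R_0 - R_1` into `Σ_{k ≥ 1} a_{k-1} a_k q^k = q R_1`, the `k = 0` term
vanishing because `a_0 = 1`.
-/

open Real

lemma rpow_neg_natCast_mul_eq_pow {x : ℝ} (hx : 0 ≤ x) (k : ℕ) (s : ℝ) :
    x ^ (-(k : ℝ) * s) = (x ^ (-s)) ^ k := by
  rw [← rpow_natCast, ← rpow_mul hx]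
  ring_nf

lemma summable_mul_mul_geometric_of_abs_le {a : ℕ → ℝ} (hbd : ∀ k : ℕ, |a k| ≤ k + 1)
    {q : ℝ} (hq : ‖q‖ < 1) (r : ℕ) :
    Summable fun k : ℕ => a k * a (k + r) * q ^ k := by
  have hmajorant : Summable fun k : ℕ => ((k : ℝ) + 1) * (k + r + 1) * ‖q‖ ^ k := by
    have hq' : ‖‖q‖‖ < 1 := by rwa [norm_norm]
    refine ((summable_pow_mul_geometric_of_norm_lt_one 2 hq').add
      (((summable_pow_mul_geometric_of_norm_lt_one 1 hq').mul_left ((r : ℝ) + 2)).add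
        ((summable_geometric_of_norm_lt_one hq').mul_left ((r : ℝ) + 1)))).congr fun k => ?_
    ring
  refine Summable.of_norm_bounded hmajorant fun k => ?_
  rw [norm_mul, norm_mul, norm_pow, Real.norm_eq_abs, Real.norm_eq_abs]
  gcongr
  · exact hbd k
  · exact_mod_cast hbd (k + r)

section HeckeRecurrence

variable {a : ℕ → ℝ} {q : ℝ}

lemma tsum_mul_shift_add_two (hrec : ∀ k : ℕ, 1 ≤ k → a (k + 1) = a 1 * a k - a (k - 1))
    (r : ℕ) (h₁ : Summable fun k : ℕ => a k * a (k + (r + 1)) * q ^ k)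
    (h₀ : Summable fun k : ℕ => a k * a (k + r) * q ^ k) :
    ∑' k : ℕ, a k * a (k + (r + 2)) * q ^ k
      = a 1 * ∑' k : ℕ, a k * a (k + (r + 1)) * q ^ k - ∑' k : ℕ, a k * a (k + r) * q ^ k := by
  rw [← tsum_mul_left, ← (h₁.mul_left (a 1)).tsum_sub h₀]
  refine tsum_congr fun k => ?_
  rw [show k + (r + 2) = k + (r + 1) + 1 by ring, hrec _ (by omega)]
  simp only [Nat.add_sub_cancel, ← add_assoc]
  ring

lemma one_add_mul_tsum_mul_succ (ha0 : a 0 = 1)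
    (hrec : ∀ k : ℕ, 1 ≤ k → a (k + 1) = a 1 * a k - a (k - 1))
    (h₀ : Summable fun k : ℕ => a k * a k * q ^ k)
    (h₁ : Summable fun k : ℕ => a k * a (k + 1) * q ^ k) :
    (1 + q) * ∑' k : ℕ, a k * a (k + 1) * q ^ k = a 1 * ∑' k : ℕ, a k * a k * q ^ k := by
  have hdiff : a 1 * ∑' k : ℕ, a k * a k * q ^ k - ∑' k : ℕ, a k * a (k + 1) * q ^ k
      = q * ∑' k : ℕ, a k * a (k + 1) * q ^ k := by
    rw [← tsum_mul_left, ← (h₀.mul_left (a 1)).tsum_sub h₁,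
      ((h₀.mul_left (a 1)).sub h₁).tsum_eq_zero_add, ← tsum_mul_left]
    simp only [ha0, zero_add, mul_one, one_mul, sub_self]
    refine tsum_congr fun k => ?_
    rw [hrec (k + 1) (by omega), Nat.add_sub_cancel, pow_succ]
    ring
  linear_combination -hdiff

end HeckeRecurrence

theorem stmt_7 (p : ℕ) (hp : p.Prime) (s : ℝ) (hs : 0 < s) (a : ℕ → ℝ)
    (ha0 : a 0 = 1) (hbd : ∀ k : ℕ, |a k| ≤ k + 1)
    (hrec : ∀ k : ℕ, 1 ≤ k → a (k + 1) = a 1 * a k - a (k - 1)) :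
    (∀ r : ℕ, Summable (fun k : ℕ => a k * a (k + r) * (p : ℝ) ^ (-(k : ℝ) * s))) ∧
    (∑' k : ℕ, a k * a (k + 1) * (p : ℝ) ^ (-(k : ℝ) * s))
      = a 1 / (1 + (p : ℝ) ^ (-s)) * ∑' k : ℕ, a k * a k * (p : ℝ) ^ (-(k : ℝ) * s) ∧
    ∀ r : ℕ, 2 ≤ r →
      (∑' k : ℕ, a k * a (k + r) * (p : ℝ) ^ (-(k : ℝ) * s))
        = a 1 * (∑' k : ℕ, a k * a (k + (r - 1)) * (p : ℝ) ^ (-(k : ℝ) * s))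
          - ∑' k : ℕ, a k * a (k + (r - 2)) * (p : ℝ) ^ (-(k : ℝ) * s) := by
  have hp0 : (0 : ℝ) ≤ p := p.cast_nonneg
  simp only [rpow_neg_natCast_mul_eq_pow hp0]
  have hq0 : 0 ≤ (p : ℝ) ^ (-s) := rpow_nonneg hp0 _
  have hq : ‖(p : ℝ) ^ (-s)‖ < 1 := by
    rw [norm_of_nonneg hq0]
    exact rpow_lt_one_of_one_lt_of_neg (by exact_mod_cast hp.one_lt) (neg_lt_zero.2 hs)
  have hsum := summable_mul_mul_geometric_of_abs_le hbd hq
  refine ⟨hsum, ?_, fun r hr => ?_⟩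
  · rw [div_mul_eq_mul_div, eq_div_iff (by positivity), mul_comm,
      one_add_mul_tsum_mul_succ ha0 hrec (by simpa using hsum 0) (hsum 1)]
  · obtain ⟨m, rfl⟩ := Nat.exists_eq_add_of_le' hr
    simpa using tsum_mul_shift_add_two hrec m (hsum (m + 1)) (hsum m)
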